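/- Diagonalization of the discrete fractional Laplacian on the discrete torus. Let d, n ≥ 1 and α > 0. For every w ∈ Z_n^d, the character ψ_w(z) = exp(−2πi z·w/n) is an eigenfunction of the operator −(−Δ_n)^{α/2}, with eigenvalue λ_w^{(α,n)} = −2 c^{(α)} Σ_{z ∈ ℤ^d∖{0}} sin²(π z·w/n) / ‖z‖^{d+α}, where the series converges absolutely. -/

import Mathlib

/-- Euclidean norm of a point of `ℤ^d`. -/
noncomputable def zNorm (d : ℕ) (z : Fin d → ℤ) : ℝ :=
  Real.sqrt (∑ i : Fin d, ((z i : ℝ)) ^ 2)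

/-- The normalising constant `c^{(α)} = (Σ_{z ∈ ℤ^d∖{0}} ‖z‖^{-d-α})⁻¹`. -/
noncomputable def cAlpha (d : ℕ) (α : ℝ) : ℝ :=
  (∑' z : Fin d → ℤ, if z ≠ 0 then zNorm d z ^ (-(d : ℝ) - α) else 0)⁻¹

/-- The long-range transition kernel on the discrete torus:
`p_n^{(α)}(x) = c^{(α)} Σ_{z ∈ ℤ^d∖{0}, z ≡ x mod n} ‖z‖^{-d-α}`. -/
noncomputable def pLR (d n : ℕ) (α : ℝ) (x : Fin d → ZMod n) : ℝ :=
  cAlpha d α * ∑' z : Fin d → ℤ,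
    if z ≠ 0 ∧ (∀ i, ((z i : ZMod n)) = x i) then zNorm d z ^ (-(d : ℝ) - α) else 0

/-- The discrete fractional Laplacian `-(-Δ_n)^{α/2}` acting on complex-valued functions:
`f ↦ (Σ_y f(y) p_n^{(α)}(x - y)) - f(x)`. -/
noncomputable def fracLapC (d n : ℕ) [NeZero n] (α : ℝ) (f : (Fin d → ZMod n) → ℂ)
    (x : Fin d → ZMod n) : ℂ :=
  (∑ y : Fin d → ZMod n, f y * (pLR d n α (x - y) : ℂ)) - f x

/-- The character `ψ_w(z) = exp(-2πi z·w/n)` on the discrete torus, computed using the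
representatives `ZMod.val`. -/
noncomputable def torusChar (d n : ℕ) (w z : Fin d → ZMod n) : ℂ :=
  Complex.exp (-2 * (Real.pi : ℂ) * Complex.I *
    (∑ i : Fin d, ((z i).val : ℂ) * ((w i).val : ℂ)) / (n : ℂ))

/-! The convolution defining `fracLapC` is translation invariant, so on the character `ψ_w` it
acts by multiplication with the Fourier coefficient `Σ_u e^{2πi u·w/n} p(u)` of the kernel.
Unfolding `p` as a periodization of the weight `‖z‖^{-d-α}` over `ℤ^d`, this coefficient is
`c Σ_z e^{2πi z·w/n} ‖z‖^{-d-α}`; the weight is even, so only the cosines survive, and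
`cos 2φ = 1 - 2 sin² φ` together with `c Σ_z ‖z‖^{-d-α} = 1` gives the eigenvalue. All series
converge absolutely because `Σ_{z ∈ L} ‖z‖^r` converges on a lattice `L` of rank `d` for `r < -d`. -/

open Complex Finset
open scoped Real

lemma zNorm_eq_norm (d : ℕ) (z : Fin d → ℤ) :
    zNorm d z = ‖WithLp.toLp 2 (fun i => (z i : ℝ))‖ := by
  simp [zNorm, EuclideanSpace.norm_eq]

lemma zNorm_neg (d : ℕ) (z : Fin d → ℤ) : zNorm d (-z) = zNorm d z := by
  simp [zNorm]

lemma zNorm_pos {d : ℕ} {z : Fin d → ℤ} (hz : z ≠ 0) : 0 < zNorm d z := by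
  rw [zNorm_eq_norm, norm_pos_iff]
  contrapose! hz
  ext i
  simpa using congrFun (congrArg WithLp.ofLp hz) i

open Module Submodule in
lemma summable_zNorm_rpow {d : ℕ} {r : ℝ} (hr : r < -d) :
    Summable (fun z : Fin d → ℤ => zNorm d z ^ r) := by
  let b := (EuclideanSpace.basisFun (Fin d) ℝ).toBasis
  have hrank : finrank ℤ (span ℤ (Set.range b)) = d := by
    rw [ZLattice.rank ℝ, finrank_euclideanSpace_fin]
  have hL := ZLattice.summable_norm_rpow (span ℤ (Set.range b)) r (by rwa [hrank])
  refine ((b.restrictScalars ℤ).equivFun.symm.toEquiv.summable_iff.mpr hL).congr fun z => ?_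
  have hz : ((b.restrictScalars ℤ).equivFun.symm z : EuclideanSpace ℝ (Fin d)) =
      WithLp.toLp 2 (fun i => (z i : ℝ)) := by
    rw [Basis.equivFun_symm_apply, Submodule.coe_sum]
    ext i
    simp only [SetLike.val_smul, Basis.restrictScalars_apply]
    simp [b, Pi.single_apply]
  show ‖((b.restrictScalars ℤ).equivFun.symm z : EuclideanSpace ℝ (Fin d))‖ ^ r = _
  rw [hz, zNorm_eq_norm]

noncomputable def jumpWeight (d : ℕ) (α : ℝ) (z : Fin d → ℤ) : ℝ :=
  if z ≠ 0 then zNorm d z ^ (-(d : ℝ) - α) else 0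

section jumpWeight

variable {d : ℕ} {α : ℝ}

lemma jumpWeight_nonneg (z : Fin d → ℤ) : 0 ≤ jumpWeight d α z := by
  unfold jumpWeight
  split_ifs
  exacts [Real.rpow_nonneg (Real.sqrt_nonneg _) _, le_rfl]

lemma mul_jumpWeight (c : ℝ) (z : Fin d → ℤ) :
    c * jumpWeight d α z = if z ≠ 0 then c * zNorm d z ^ (-(d : ℝ) - α) else 0 := by
  rw [jumpWeight, mul_ite, mul_zero]

lemma jumpWeight_neg (z : Fin d → ℤ) : jumpWeight d α (-z) = jumpWeight d α z := by
  simp [jumpWeight, zNorm_neg]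

lemma summable_jumpWeight (hα : 0 < α) : Summable (jumpWeight d α) :=
  (summable_zNorm_rpow (r := -(d : ℝ) - α) (by linarith)).of_nonneg_of_le jumpWeight_nonneg
    fun z => by
      unfold jumpWeight
      split_ifs
      exacts [le_rfl, Real.rpow_nonneg (Real.sqrt_nonneg _) _]

lemma tsum_jumpWeight_pos (hd : 1 ≤ d) (hα : 0 < α) : 0 < ∑' z, jumpWeight d α z := by
  have hone : (fun _ => 1 : Fin d → ℤ) ≠ 0 := fun h => one_ne_zero (congrFun h ⟨0, hd⟩)
  refine (summable_jumpWeight hα).tsum_pos jumpWeight_nonneg (fun _ => 1) ?_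
  rw [jumpWeight, if_pos hone]
  exact Real.rpow_pos_of_pos (zNorm_pos hone) _

lemma cAlpha_mul_tsum_jumpWeight (hd : 1 ≤ d) (hα : 0 < α) :
    cAlpha d α * ∑' z, jumpWeight d α z = 1 :=
  inv_mul_cancel₀ (tsum_jumpWeight_pos hd hα).ne'

end jumpWeight

lemma pLR_eq_tsum_jumpWeight {n : ℕ} (d : ℕ) (α : ℝ) (u : Fin d → ZMod n) :
    pLR d n α u =
      cAlpha d α * ∑' z, if (fun i => (z i : ZMod n)) = u then jumpWeight d α z else 0 := by
  simp only [pLR, jumpWeight, ite_and, funext_iff]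
  congr 1
  exact tsum_congr fun z => by split_ifs <;> simp_all

section torusChar

variable {d n : ℕ} [NeZero n]

lemma torusChar_eq_stdAddChar (w x : Fin d → ZMod n) :
    torusChar d n w x = ZMod.stdAddChar (-∑ i, x i * w i) := by
  have hcast : -∑ i, x i * w i = ((-∑ i, ((x i).val * (w i).val : ℤ) : ℤ) : ZMod n) := by
    push_cast
    simp
  rw [hcast, ZMod.stdAddChar_coe, torusChar]
  congr 1
  push_cast
  ring

lemma torusChar_sub (w x u : Fin d → ZMod n) :
    torusChar d n w (x - u) = torusChar d n w x * ZMod.stdAddChar (∑ i, u i * w i) := by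
  simp only [torusChar_eq_stdAddChar, ← AddChar.map_add_eq_mul, Pi.sub_apply, sub_mul,
    sum_sub_distrib]
  congr 1
  ring

lemma stdAddChar_sum_intCast_mul (w : Fin d → ZMod n) (z : Fin d → ℤ) :
    ZMod.stdAddChar (∑ i, (z i : ZMod n) * w i) =
      exp ((2 * (π * (∑ i, (z i : ℝ) * (w i).val) / n) : ℝ) * I) := by
  have hcast : ∑ i, (z i : ZMod n) * w i = ((∑ i, z i * (w i).val : ℤ) : ZMod n) := by
    push_cast
    simp
  rw [hcast, ZMod.stdAddChar_coe]
  congr 1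
  push_cast
  ring

end torusChar

lemma sum_mul_tsum_ite_eq {ι β R : Type*} [Fintype β] [DecidableEq β] [NormedRing R]
    [CompleteSpace R] (p : ι → β) (g : β → R) {J : ι → R} (hJ : Summable J) :
    ∑ b, g b * ∑' i, (if p i = b then J i else 0) = ∑' i, g (p i) * J i := by
  have hfiber (b : β) : Summable fun i => if p i = b then J i else 0 :=
    (hJ.indicator {i | p i = b}).congr fun i => by simp [Set.indicator_apply]
  calc ∑ b, g b * ∑' i, (if p i = b then J i else 0)
      = ∑ b, ∑' i, g b * if p i = b then J i else 0 :=
        sum_congr rfl fun b _ => ((hfiber b).tsum_mul_left _).symm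
    _ = ∑' i, ∑ b, g b * if p i = b then J i else 0 :=
        (Summable.tsum_finsetSum fun b _ => (hfiber b).mul_left _).symm
    _ = ∑' i, g (p i) * J i := tsum_congr fun i => by simp [mul_ite]

lemma Summable.mul_of_abs_le_one {ι : Type*} {f J : ι → ℝ} (hJ : Summable J)
    (hf : ∀ i, |f i| ≤ 1) : Summable fun i => f i * J i :=
  hJ.abs.of_norm_bounded fun i => by
    rw [Real.norm_eq_abs, abs_mul]
    exact mul_le_of_le_one_left (abs_nonneg _) (hf i)

lemma tsum_exp_mul_I_mul_of_odd {ι : Type*} [InvolutiveNeg ι] {θ J : ι → ℝ}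
    (hθ : ∀ i, θ (-i) = -θ i) (hJ : ∀ i, J (-i) = J i) (hsum : Summable J) :
    ∑' i, exp (θ i * I) * J i = (∑' i, Real.cos (θ i) * J i : ℝ) := by
  have hsin : ∑' i, Real.sin (θ i) * J i = 0 := by
    have h := tsum_comp_neg fun i => Real.sin (θ i) * J i
    simp only [hθ, hJ, Real.sin_neg, neg_mul, tsum_neg] at h
    linarith
  calc ∑' i, exp (θ i * I) * J i
      = ∑' i, (((Real.cos (θ i) * J i : ℝ) : ℂ) + ((Real.sin (θ i) * J i : ℝ) : ℂ) * I) :=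
        tsum_congr fun i => by rw [exp_mul_I, ← ofReal_cos, ← ofReal_sin]; push_cast; ring
    _ = (∑' i, Real.cos (θ i) * J i : ℝ) + (∑' i, Real.sin (θ i) * J i : ℝ) * I := by
        rw [Summable.tsum_add, tsum_mul_right, ofReal_tsum, ofReal_tsum]
        · exact summable_ofReal.mpr (hsum.mul_of_abs_le_one fun i => Real.abs_cos_le_one _)
        · exact (summable_ofReal.mpr
            (hsum.mul_of_abs_le_one fun i => Real.abs_sin_le_one _)).mul_right _
    _ = (∑' i, Real.cos (θ i) * J i : ℝ) := by rw [hsin]; simp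

lemma summable_sin_sq_mul {ι : Type*} {J : ι → ℝ} (hJ : Summable J) (φ : ι → ℝ) :
    Summable fun i => Real.sin (φ i) ^ 2 * J i :=
  hJ.mul_of_abs_le_one fun i => by
    rw [abs_of_nonneg (sq_nonneg _)]
    exact Real.sin_sq_le_one _

lemma tsum_cos_two_mul_mul {ι : Type*} {J : ι → ℝ} (hJ : Summable J) (φ : ι → ℝ) :
    ∑' i, Real.cos (2 * φ i) * J i = ∑' i, J i - 2 * ∑' i, Real.sin (φ i) ^ 2 * J i := by
  rw [← tsum_mul_left, ← hJ.tsum_sub ((summable_sin_sq_mul hJ φ).mul_left 2)]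
  exact tsum_congr fun i => by rw [Real.cos_two_mul, Real.cos_sq']; ring

lemma fracLapC_torusChar {d n : ℕ} [NeZero n] (α : ℝ) (w x : Fin d → ZMod n) :
    fracLapC d n α (torusChar d n w) x =
      torusChar d n w x * (∑ u, ZMod.stdAddChar (∑ i, u i * w i) * (pLR d n α u : ℂ) - 1) := by
  rw [fracLapC, ← Equiv.sum_comp (Equiv.subLeft x)]
  simp [torusChar_sub, mul_sum, mul_sub, mul_assoc]

lemma sum_stdAddChar_mul_pLR {d n : ℕ} [NeZero n] {α : ℝ} (hα : 0 < α) (w : Fin d → ZMod n) :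
    ∑ u, ZMod.stdAddChar (∑ i, u i * w i) * (pLR d n α u : ℂ) =
      (cAlpha d α * ∑' z, Real.cos (2 * (π * (∑ i, (z i : ℝ) * (w i).val) / n)) *
        jumpWeight d α z : ℝ) := by
  have hJ : Summable (jumpWeight d α) := summable_jumpWeight hα
  simp_rw [pLR_eq_tsum_jumpWeight, ofReal_mul, ofReal_tsum, apply_ite ofReal, ofReal_zero,
    mul_left_comm _ (cAlpha d α : ℂ), ← mul_sum]
  rw [sum_mul_tsum_ite_eq _ _ (summable_ofReal.mpr hJ)]
  simp_rw [stdAddChar_sum_intCast_mul]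
  rw [tsum_exp_mul_I_mul_of_odd (fun z => by simp [sum_neg_distrib]; ring) jumpWeight_neg hJ,
    ofReal_tsum]

/-- **Diagonalization of the discrete fractional Laplacian.** For every `w`,
the character `ψ_w` is an eigenfunction of `-(-Δ_n)^{α/2}` with eigenvalue
`λ_w^{(α,n)} = -2 c^{(α)} Σ_{z ∈ ℤ^d∖{0}} sin²(π z·w/n) / ‖z‖^{d+α}`, where the series
converges absolutely. -/
theorem frac_laplacian_eigenfunction (d n : ℕ) (hd : 1 ≤ d) [NeZero n]
    (α : ℝ) (hα : 0 < α) (w : Fin d → ZMod n) :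
    Summable (fun z : Fin d → ℤ =>
      if z ≠ 0 then
        Real.sin (Real.pi * (∑ i : Fin d, (z i : ℝ) * ((w i).val : ℝ)) / n) ^ 2 *
          zNorm d z ^ (-(d : ℝ) - α)
      else 0) ∧
    ∀ x : Fin d → ZMod n,
      fracLapC d n α (torusChar d n w) x =
      ((-2 * cAlpha d α * ∑' z : Fin d → ℤ,
        if z ≠ 0 then
          Real.sin (Real.pi * (∑ i : Fin d, (z i : ℝ) * ((w i).val : ℝ)) / n) ^ 2 *
            zNorm d z ^ (-(d : ℝ) - α)
        else 0 : ℝ) : ℂ) * torusChar d n w x := by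
  have hJ : Summable (jumpWeight d α) := summable_jumpWeight hα
  simp_rw [← mul_jumpWeight]
  refine ⟨summable_sin_sq_mul hJ _, fun x => ?_⟩
  rw [fracLapC_torusChar, sum_stdAddChar_mul_pLR hα, tsum_cos_two_mul_mul hJ, ← ofReal_one,
    ← ofReal_sub, mul_comm]
  congr 2
  linear_combination cAlpha_mul_tsum_jumpWeight hd hα
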